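/- Assume A(p̌) is nonsingular, let C = A(p̌)^{-1}, x̌ = C a(p̌), Δ = Σ_{k=1}^K |C A_k| p̂_k, and assume ρ(Δ) < 1. Define F ∈ ℝ^{n×K} with columns a₁,…,a_K, G ∈ ℝ^{n×K} with columns A₁x̌,…,A_K x̌, B⁰ = C(F − G), H̄ = (I − Δ)^{-1}, the matrix H_ by (H_)_{ij} = −H̄_{ij} for i ≠ j and (H_)_{jj} = H̄_{jj}/(2H̄_{jj} − 1), Ȟ = (H̄ + H_)/2, Ĥ = (H̄ − H_)/2, V = Ȟ B⁰ and l̂ = Ĥ |B⁰| p̂. Then for every p ∈ 𝐩 the matrix A(p) is invertible and there exists l ∈ ℝⁿ with |l_i| ≤ l̂_i for all i such that A(p)^{-1} a(p) = x̌ + V (p − p̌) + l; in particular Σᵖ ⊆ { x̌ + V q + l : q ∈ ℝ^K, |q| ≤ p̂, l ∈ ℝⁿ, |l| ≤ l̂ }. (Part (ii) of Kolev's theorem: the p,l-solution x(p', l) = x̌ + V p' + l encloses the united parametric solution set.) -/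

import Mathlib

/-!
Write `q = p - p̌`, `E = ∑ qₖ Aₖ` and `D = C E`. Then `A(p) = A(p̌) (I + D)` with `|D| ≤ Δ`, and
`A(p)⁻¹ a(p) = x̌ + (I + D)⁻¹ B⁰ q`. Since `Δ ≥ 0` and `Δᵐ → 0` (Gelfand's formula),
`H̄ = (I - Δ)⁻¹ = ∑ Δᵐ ≥ 0`, so `(I - Δ) w ≤ b` implies `w ≤ H̄ b`. Applied to the columns of
`M = (I + D)⁻¹` and to positive parts, this comparison gives `|M| ≤ H̄` and
`M_jj ≥ H̄_jj / (2 H̄_jj - 1)`, i.e. `H_ ≤ M ≤ H̄`. Hence `|M - Ȟ| ≤ Ĥ`, and `l = (M - Ȟ) B⁰ q`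
satisfies `|l| ≤ Ĥ |B⁰| p̂`.
-/

open Matrix

/-- Spectral radius of a real square matrix: the maximum modulus of its
complex eigenvalues, formalized via the spectral radius of the matrix
viewed over `ℂ`. -/
noncomputable def specRad {n : ℕ} (M : Matrix (Fin n) (Fin n) ℝ) : ENNReal :=
  spectralRadius ℂ (M.map (algebraMap ℝ ℂ))

open Filter Topology Finset

theorem tendsto_pow_atTop_nhds_zero_of_spectralRadius_lt_one {A : Type*} [NormedRing A]
    [NormedAlgebra ℂ A] [CompleteSpace A] {a : A} (h : spectralRadius ℂ a < 1) :
    Tendsto (a ^ ·) atTop (𝓝 0) := by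
  obtain ⟨r, hρr, hr1⟩ := ENNReal.lt_iff_exists_nnreal_btwn.mp h
  have hpow : ∀ᶠ m : ℕ in atTop, ‖a ^ m‖ ≤ (r : ℝ) ^ m := by
    filter_upwards [(spectrum.pow_nnnorm_pow_one_div_tendsto_nhds_spectralRadius a).eventually_lt_const
      hρr, eventually_ge_atTop 1] with m hm hm1
    rw [one_div, ENNReal.rpow_inv_lt_iff (by positivity), ENNReal.rpow_natCast] at hm
    exact_mod_cast hm.le
  exact squeeze_zero_norm' hpow
    (tendsto_pow_atTop_nhds_zero_of_lt_one r.coe_nonneg (by exact_mod_cast hr1))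

theorem tendsto_pow_atTop_nhds_zero_of_specRad_lt_one {n : ℕ} {Δ : Matrix (Fin n) (Fin n) ℝ}
    (h : specRad Δ < 1) : Tendsto (Δ ^ ·) atTop (𝓝 0) := by
  -- Gelfand's formula needs some Banach algebra norm on the complex matrices; any one will do.
  let _ := Matrix.linftyOpNormedRing (n := Fin n) (α := ℂ)
  let _ := Matrix.linftyOpNormedAlgebra (n := Fin n) (α := ℂ) (R := ℂ)
  have : CompleteSpace (Matrix (Fin n) (Fin n) ℂ) := FiniteDimensional.complete ℂ _
  have hre : Continuous fun N : Matrix (Fin n) (Fin n) ℂ => N.map Complex.re :=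
    continuous_id.matrix_map Complex.continuous_re
  have := (hre.tendsto 0).comp (tendsto_pow_atTop_nhds_zero_of_spectralRadius_lt_one h)
  convert this using 2 with m
  · rw [Function.comp_apply, ← Matrix.map_pow, Matrix.map_map]
    ext; simp
  · simp

section Neumann

variable {ι : Type*} [Fintype ι] [DecidableEq ι] {Δ : Matrix ι ι ℝ}

theorem isUnit_one_sub_of_tendsto_pow (hpow : Tendsto (Δ ^ ·) atTop (𝓝 0)) :
    IsUnit (1 - Δ) := by
  rw [isUnit_iff_isUnit_det, isUnit_iff_ne_zero]
  intro hdet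
  obtain ⟨v, hv, hv0⟩ := exists_mulVec_eq_zero_iff.mpr hdet
  have hfix : Δ *ᵥ v = v := by
    rw [sub_mulVec, one_mulVec, sub_eq_zero] at hv0
    exact hv0.symm
  have hpowfix : ∀ m : ℕ, Δ ^ m *ᵥ v = v := by
    intro m
    induction m with
    | zero => simp
    | succ m ih => rw [pow_succ, ← mulVec_mulVec, hfix, ih]
  have hlim : Tendsto (fun m : ℕ => Δ ^ m *ᵥ v) atTop (𝓝 (0 *ᵥ v)) :=
    ((continuous_id.matrix_mulVec continuous_const).tendsto 0).comp hpow
  simp only [hpowfix, zero_mulVec] at hlim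
  exact hv (tendsto_const_nhds_iff.mp hlim)

theorem inv_one_sub_apply_nonneg (hΔ : ∀ i j, 0 ≤ Δ i j)
    (hpow : Tendsto (Δ ^ ·) atTop (𝓝 0)) (i j : ι) : 0 ≤ (1 - Δ)⁻¹ i j := by
  have hdet := (isUnit_iff_isUnit_det _).mp (isUnit_one_sub_of_tendsto_pow hpow)
  have hgeom : ∀ m, ∑ k ∈ range m, Δ ^ k = (1 - Δ ^ m) * (1 - Δ)⁻¹ := fun m => by
    rw [← geom_sum_mul_neg, mul_assoc, mul_nonsing_inv _ hdet, mul_one]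
  have hlim : Tendsto (fun m => ∑ k ∈ range m, Δ ^ k) atTop (𝓝 (1 - Δ)⁻¹) := by
    simp only [hgeom]
    simpa using (tendsto_const_nhds (x := (1 : Matrix ι ι ℝ)).sub hpow).mul_const (1 - Δ)⁻¹
  refine ge_of_tendsto (((continuous_apply_apply i j).tendsto _).comp hlim)
    (Eventually.of_forall fun m => ?_)
  show 0 ≤ (∑ k ∈ range m, Δ ^ k) i j
  rw [Matrix.sum_apply]
  exact sum_nonneg fun k _ => pow_apply_nonneg hΔ k i j

end Neumann

section Comparison

variable {m ι : Type*} [Fintype ι]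

theorem mulVec_mono_of_nonneg {N : Matrix m ι ℝ} (hN : ∀ i j, 0 ≤ N i j) {v w : ι → ℝ}
    (hvw : v ≤ w) : N *ᵥ v ≤ N *ᵥ w := fun i =>
  sum_le_sum fun j _ => mul_le_mul_of_nonneg_left (hvw j) (hN i j)

theorem abs_mulVec_le {M N : Matrix m ι ℝ} (hMN : ∀ i j, |M i j| ≤ N i j) (v : ι → ℝ) :
    |M *ᵥ v| ≤ N *ᵥ |v| := fun i =>
  calc |∑ j, M i j * v j| ≤ ∑ j, |M i j * v j| := abs_sum_le_sum_abs _ _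
    _ ≤ ∑ j, N i j * |v j| := sum_le_sum fun j _ => by
      rw [abs_mul]; exact mul_le_mul_of_nonneg_right (hMN i j) (abs_nonneg _)

theorem abs_mulVec_mulVec_le {o : Type*} [Fintype o] {M N : Matrix m ι ℝ} {B : Matrix ι o ℝ}
    (hMN : ∀ i j, |M i j| ≤ N i j) {q r : o → ℝ} (hqr : ∀ k, |q k| ≤ r k) :
    |M *ᵥ (B *ᵥ q)| ≤ N *ᵥ (B.map abs *ᵥ r) := by
  have hN : ∀ i j, 0 ≤ N i j := fun i j => (abs_nonneg _).trans (hMN i j)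
  calc |M *ᵥ (B *ᵥ q)| ≤ N *ᵥ |B *ᵥ q| := abs_mulVec_le hMN _
    _ ≤ N *ᵥ (B.map abs *ᵥ |q|) := mulVec_mono_of_nonneg hN (abs_mulVec_le (fun _ _ => le_rfl) q)
    _ ≤ N *ᵥ (B.map abs *ᵥ r) :=
      mulVec_mono_of_nonneg hN (mulVec_mono_of_nonneg (fun _ _ => abs_nonneg _) hqr)

end Comparison

section NonnegInverse

variable {ι : Type*} [Fintype ι] [DecidableEq ι] {Δ : Matrix ι ι ℝ}

theorem le_inv_one_sub_mulVec (hunit : IsUnit (1 - Δ)) (hinv : ∀ i j, 0 ≤ (1 - Δ)⁻¹ i j)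
    {w b : ι → ℝ} (hwb : (1 - Δ) *ᵥ w ≤ b) : w ≤ (1 - Δ)⁻¹ *ᵥ b := by
  have hdet := (isUnit_iff_isUnit_det _).mp hunit
  calc w = (1 - Δ)⁻¹ *ᵥ ((1 - Δ) *ᵥ w) := by
        rw [mulVec_mulVec, nonsing_inv_mul _ hdet, one_mulVec]
    _ ≤ (1 - Δ)⁻¹ *ᵥ b := mulVec_mono_of_nonneg hinv hwb

theorem nonpos_of_forall_pos_le_mulVec (hΔ : ∀ i j, 0 ≤ Δ i j) (hunit : IsUnit (1 - Δ))
    (hinv : ∀ i j, 0 ≤ (1 - Δ)⁻¹ i j) {w : ι → ℝ} (hw : ∀ i, 0 < w i → w i ≤ (Δ *ᵥ w) i) :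
    w ≤ 0 := by
  have hpos : w⁺ ≤ (1 - Δ)⁻¹ *ᵥ 0 := by
    refine le_inv_one_sub_mulVec hunit hinv fun i => ?_
    have hmono : Δ *ᵥ w ≤ Δ *ᵥ w⁺ := mulVec_mono_of_nonneg hΔ (le_posPart w)
    rw [sub_mulVec, one_mulVec, Pi.sub_apply, Pi.zero_apply, sub_nonpos]
    rcases lt_or_ge 0 (w i) with hwi | hwi
    · rw [Pi.posPart_apply, posPart_eq_self.mpr hwi.le]
      exact (hw i hwi).trans (hmono i)
    · rw [Pi.posPart_apply, posPart_eq_zero.mpr hwi]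
      simpa using mulVec_mono_of_nonneg hΔ (posPart_nonneg w) i
  rw [mulVec_zero] at hpos
  exact posPart_nonpos.mp hpos

theorem abs_le_inv_one_sub_mulVec_of_one_add_mulVec_eq (hunit : IsUnit (1 - Δ))
    (hinv : ∀ i j, 0 ≤ (1 - Δ)⁻¹ i j) {D : Matrix ι ι ℝ} (hD : ∀ i j, |D i j| ≤ Δ i j)
    {x b : ι → ℝ} (hx : (1 + D) *ᵥ x = b) : |x| ≤ (1 - Δ)⁻¹ *ᵥ |b| := by
  refine le_inv_one_sub_mulVec hunit hinv fun i => ?_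
  have hxb : x i = b i - (D *ᵥ x) i := by
    rw [← hx, add_mulVec, one_mulVec, Pi.add_apply, add_sub_cancel_right]
  rw [sub_mulVec, one_mulVec, Pi.sub_apply, sub_le_iff_le_add, Pi.abs_apply, Pi.abs_apply, hxb]
  calc |b i - (D *ᵥ x) i| ≤ |b i| + |(D *ᵥ x) i| := abs_sub _ _
    _ ≤ |b i| + (Δ *ᵥ |x|) i := add_le_add_right (abs_mulVec_le hD x i) _

theorem isUnit_one_add_of_abs_le (hunit : IsUnit (1 - Δ)) (hinv : ∀ i j, 0 ≤ (1 - Δ)⁻¹ i j)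
    {D : Matrix ι ι ℝ} (hD : ∀ i j, |D i j| ≤ Δ i j) : IsUnit (1 + D) := by
  rw [isUnit_iff_isUnit_det, isUnit_iff_ne_zero]
  intro hdet
  obtain ⟨v, hv, hv0⟩ := exists_mulVec_eq_zero_iff.mpr hdet
  have hvabs := abs_le_inv_one_sub_mulVec_of_one_add_mulVec_eq hunit hinv hD hv0
  rw [abs_zero, mulVec_zero] at hvabs
  exact hv (funext fun i => abs_nonpos_iff.mp (hvabs i))

theorem abs_inv_one_add_apply_le (hunit : IsUnit (1 - Δ)) (hinv : ∀ i j, 0 ≤ (1 - Δ)⁻¹ i j)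
    {D : Matrix ι ι ℝ} (hD : ∀ i j, |D i j| ≤ Δ i j) (i j : ι) :
    |(1 + D)⁻¹ i j| ≤ (1 - Δ)⁻¹ i j := by
  have hdet := (isUnit_iff_isUnit_det _).mp (isUnit_one_add_of_abs_le hunit hinv hD)
  have hcol := abs_le_inv_one_sub_mulVec_of_one_add_mulVec_eq hunit hinv hD
    (x := (1 + D)⁻¹ *ᵥ Pi.single j 1) (by rw [mulVec_mulVec, mul_nonsing_inv _ hdet, one_mulVec])
  rw [abs_of_nonneg (Pi.single_nonneg.mpr zero_le_one : (0 : ι → ℝ) ≤ Pi.single j 1)] at hcol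
  simpa [mulVec_single_one] using hcol i

theorem le_smul_of_le_mulVec_of_ne (hΔ : ∀ i j, 0 ≤ Δ i j) (hunit : IsUnit (1 - Δ))
    (hinv : ∀ i j, 0 ≤ (1 - Δ)⁻¹ i j) {z h : ι → ℝ} {j : ι}
    (hz : ∀ i ≠ j, z i ≤ (Δ *ᵥ z) i) (hh : ∀ i ≠ j, h i = (Δ *ᵥ h) i) (hj : h j ≠ 0) :
    z ≤ (z j / h j) • h := by
  refine sub_nonpos.mp (nonpos_of_forall_pos_le_mulVec hΔ hunit hinv fun i hi => ?_)
  have hij : i ≠ j := by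
    rintro rfl
    simp [div_mul_cancel₀ _ hj] at hi
  rw [mulVec_sub, mulVec_smul, Pi.sub_apply, Pi.sub_apply, Pi.smul_apply, Pi.smul_apply,
    ← hh i hij]
  linarith [hz i hij]

theorem inv_one_sub_mulVec_eq (hunit : IsUnit (1 - Δ)) (b : ι → ℝ) :
    (1 - Δ)⁻¹ *ᵥ b = b + Δ *ᵥ ((1 - Δ)⁻¹ *ᵥ b) := by
  have hb : (1 - Δ) *ᵥ ((1 - Δ)⁻¹ *ᵥ b) = b := by
    rw [mulVec_mulVec, mul_nonsing_inv _ ((isUnit_iff_isUnit_det _).mp hunit), one_mulVec]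
  rw [sub_mulVec, one_mulVec] at hb
  exact sub_eq_iff_eq_add.mp hb

theorem one_le_inv_one_sub_apply_self (hΔ : ∀ i j, 0 ≤ Δ i j) (hunit : IsUnit (1 - Δ))
    (hinv : ∀ i j, 0 ≤ (1 - Δ)⁻¹ i j) (j : ι) : 1 ≤ (1 - Δ)⁻¹ j j := by
  have hcol := congrFun (inv_one_sub_mulVec_eq hunit (Pi.single j 1)) j
  have hrest : 0 ≤ (Δ *ᵥ ((1 - Δ)⁻¹ *ᵥ Pi.single j 1)) j :=
    sum_nonneg fun k _ => mul_nonneg (hΔ j k) (by simpa [mulVec_single_one] using hinv k j)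
  simp only [mulVec_single_one, col_apply, Pi.add_apply, Pi.single_eq_same] at hcol hrest
  linarith

theorem div_two_mul_sub_one_le_of_one_sub_le {x h : ℝ} (hh : 1 ≤ h)
    (hx : 1 - x ≤ |x| / h * (h - 1)) : h / (2 * h - 1) ≤ x := by
  rw [div_mul_eq_mul_div, le_div_iff₀ (by linarith)] at hx
  rw [div_le_iff₀ (by linarith)]
  rcases le_or_gt 0 x with hx0 | hx0
  · rw [abs_of_nonneg hx0] at hx; nlinarith
  · rw [abs_of_neg hx0] at hx; nlinarith

theorem div_two_mul_sub_one_le_inv_one_add_apply (hΔ : ∀ i j, 0 ≤ Δ i j)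
    (hunit : IsUnit (1 - Δ)) (hinv : ∀ i j, 0 ≤ (1 - Δ)⁻¹ i j) {D : Matrix ι ι ℝ}
    (hD : ∀ i j, |D i j| ≤ Δ i j) (j : ι) :
    (1 - Δ)⁻¹ j j / (2 * (1 - Δ)⁻¹ j j - 1) ≤ (1 + D)⁻¹ j j := by
  have hdet := (isUnit_iff_isUnit_det _).mp (isUnit_one_add_of_abs_le hunit hinv hD)
  -- The `j`-th column `x` of `(1 + D)⁻¹` is dominated by the multiple `(|x j| / h j) • h` of the
  -- `j`-th column `h` of `(1 - Δ)⁻¹`; the `j`-th row of `x + D x = eⱼ` then bounds `x j` below.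
  set x := (1 + D)⁻¹ *ᵥ Pi.single j 1 with hxdef
  set h := (1 - Δ)⁻¹ *ᵥ Pi.single j 1 with hhdef
  have hx : x + D *ᵥ x = Pi.single j 1 := by
    have hx1 : (1 + D) *ᵥ x = Pi.single j 1 := by
      rw [hxdef, mulVec_mulVec, mul_nonsing_inv _ hdet, one_mulVec]
    rwa [add_mulVec, one_mulVec] at hx1
  have hh : ∀ i, h i = (Pi.single j 1 : ι → ℝ) i + (Δ *ᵥ h) i :=
    congrFun (inv_one_sub_mulVec_eq hunit _)
  have hhj : 1 ≤ h j := by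
    simpa [hhdef, mulVec_single_one] using one_le_inv_one_sub_apply_self hΔ hunit hinv j
  have hz : ∀ i ≠ j, |x| i ≤ (Δ *ᵥ |x|) i := fun i hi => by
    have hxi : x i = -(D *ᵥ x) i := by
      have := congrFun hx i
      simp only [Pi.add_apply, Pi.single_eq_of_ne hi] at this
      linarith
    rw [Pi.abs_apply, hxi, abs_neg]
    exact abs_mulVec_le hD x i
  have hcol := le_smul_of_le_mulVec_of_ne hΔ hunit hinv hz (h := h)
    (fun i hi => by rw [hh i, Pi.single_eq_of_ne hi, zero_add]) (by linarith)
  have key : 1 - x j ≤ |x j| / h j * (h j - 1) := calc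
    1 - x j = (D *ᵥ x) j := by
      have := congrFun hx j
      simp only [Pi.add_apply, Pi.single_eq_same] at this
      linarith
    _ ≤ (Δ *ᵥ |x|) j := (le_abs_self _).trans (abs_mulVec_le hD x j)
    _ ≤ (Δ *ᵥ ((|x| j / h j) • h)) j := mulVec_mono_of_nonneg hΔ hcol j
    _ = |x j| / h j * (h j - 1) := by
      rw [mulVec_smul, Pi.smul_apply, smul_eq_mul, Pi.abs_apply, hh j, Pi.single_eq_same]
      ring
  simp only [hxdef, hhdef, mulVec_single_one, col_apply] at key hhj
  exact div_two_mul_sub_one_le_of_one_sub_le hhj key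

theorem abs_inv_one_add_sub_apply_le (hΔ : ∀ i j, 0 ≤ Δ i j) (hunit : IsUnit (1 - Δ))
    (hinv : ∀ i j, 0 ≤ (1 - Δ)⁻¹ i j) {D : Matrix ι ι ℝ} (hD : ∀ i j, |D i j| ≤ Δ i j)
    {L : Matrix ι ι ℝ}
    (hL : ∀ i j, L i j = if i = j then (1 - Δ)⁻¹ j j / (2 * (1 - Δ)⁻¹ j j - 1) else -(1 - Δ)⁻¹ i j)
    (i j : ι) :
    |((1 + D)⁻¹ - (1 / 2 : ℝ) • ((1 - Δ)⁻¹ + L)) i j| ≤ ((1 / 2 : ℝ) • ((1 - Δ)⁻¹ - L)) i j := by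
  have hupper := abs_le.mp (abs_inv_one_add_apply_le hunit hinv hD i j)
  have hlower : L i j ≤ (1 + D)⁻¹ i j := by
    rw [hL]
    split_ifs with hij
    · subst hij
      exact div_two_mul_sub_one_le_inv_one_add_apply hΔ hunit hinv hD i
    · linarith [hupper.1]
  simp only [Matrix.sub_apply, Matrix.add_apply, Matrix.smul_apply, smul_eq_mul]
  rw [abs_le]
  constructor <;> linarith [hupper.2]

end NonnegInverse

section Perturbation

variable {ι : Type*} [Fintype ι] [DecidableEq ι] {R : Type*} [CommRing R] {P E : Matrix ι ι R}

theorem add_eq_mul_one_add_inv_mul (hP : IsUnit P) (E : Matrix ι ι R) :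
    P + E = P * (1 + P⁻¹ * E) := by
  rw [mul_add, mul_one, ← mul_assoc, mul_nonsing_inv _ ((isUnit_iff_isUnit_det _).mp hP), one_mul]

theorem inv_add_mulVec_add_eq (hP : IsUnit P) (hD : IsUnit (1 + P⁻¹ * E)) (b e : ι → R) :
    (P + E)⁻¹ *ᵥ (b + e) =
      P⁻¹ *ᵥ b + (1 + P⁻¹ * E)⁻¹ *ᵥ (P⁻¹ *ᵥ (e - E *ᵥ (P⁻¹ *ᵥ b))) := by
  have hxc : P⁻¹ *ᵥ b = (1 + P⁻¹ * E)⁻¹ *ᵥ ((1 + P⁻¹ * E) *ᵥ (P⁻¹ *ᵥ b)) := by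
    rw [mulVec_mulVec, nonsing_inv_mul _ ((isUnit_iff_isUnit_det _).mp hD), one_mulVec]
  rw [add_eq_mul_one_add_inv_mul hP, Matrix.mul_inv_rev, ← mulVec_mulVec]
  conv_rhs => enter [1]; rw [hxc]
  rw [← mulVec_add]
  congr 1
  simp only [add_mulVec, one_mulVec, mulVec_add, mulVec_sub, ← mulVec_mulVec]
  abel

end Perturbation

section Parametric

variable {m n κ : Type*} [Fintype κ]

theorem mulVec_eq_sum_smul {F : Matrix m κ ℝ} {a : κ → m → ℝ} (hF : ∀ i k, F i k = a k i)
    (q : κ → ℝ) : F *ᵥ q = ∑ k, q k • a k := by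
  ext i
  simp [mulVec, dotProduct, hF, mul_comm]

theorem sub_mulVec_eq_sum_smul_sub [Fintype m] {F G : Matrix m κ ℝ} {a : κ → m → ℝ}
    {A : κ → Matrix m m ℝ} {x : m → ℝ} (hF : ∀ i k, F i k = a k i)
    (hG : ∀ i k, G i k = (A k *ᵥ x) i) (q : κ → ℝ) :
    (F - G) *ᵥ q = ∑ k, q k • a k - (∑ k, q k • A k) *ᵥ x := by
  rw [sub_mulVec, mulVec_eq_sum_smul hF, mulVec_eq_sum_smul hG, sum_mulVec]
  simp only [smul_mulVec]

theorem abs_sum_smul_apply_le {q r : κ → ℝ} (hqr : ∀ k, |q k| ≤ r k) (N : κ → Matrix m n ℝ)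
    (i : m) (j : n) : |(∑ k, q k • N k) i j| ≤ (∑ k, r k • (N k).map abs) i j := by
  simp only [Matrix.sum_apply, Matrix.smul_apply, map_apply, smul_eq_mul]
  refine (abs_sum_le_sum_abs _ _).trans (sum_le_sum fun k _ => ?_)
  rw [abs_mul]
  exact mul_le_mul_of_nonneg_right (hqr k) (abs_nonneg _)

theorem sum_smul_eq_add_sum_sub_smul {M : Type*} [AddCommGroup M] [Module ℝ M]
    (p pc : κ → ℝ) (v : κ → M) :
    ∑ k, p k • v k = ∑ k, pc k • v k + ∑ k, (p k - pc k) • v k := by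
  simp [sub_smul, sum_sub_distrib]

end Parametric

/-- Part (ii) of Kolev's theorem: under the regularity assumptions, for every
parameter `p` in the box the matrix `A(p)` is invertible and the solution
`A(p)⁻¹ a(p)` equals `x̌ + V (p - p̌) + l` for some `l` with `|l| ≤ l̂`; in
particular the united parametric solution set is contained in the image of
the `p,l`-solution `x(p', l) = x̌ + V p' + l`. -/
theorem stmt_4 {n K : ℕ}
    (A₀ : Matrix (Fin n) (Fin n) ℝ) (A : Fin K → Matrix (Fin n) (Fin n) ℝ)
    (a₀ : Fin n → ℝ) (a : Fin K → Fin n → ℝ)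
    (pc ph : Fin K → ℝ) (hph : ∀ k, 0 ≤ ph k)
    (hreg : IsUnit (A₀ + ∑ k, pc k • A k))
    (C : Matrix (Fin n) (Fin n) ℝ) (hC : C = (A₀ + ∑ k, pc k • A k)⁻¹)
    (xc : Fin n → ℝ) (hxc : xc = C.mulVec (a₀ + ∑ k, pc k • a k))
    (Δ : Matrix (Fin n) (Fin n) ℝ)
    (hΔ : Δ = ∑ k, ph k • ((C * A k).map (fun x => |x|)))
    (hρ : specRad Δ < 1)
    (F G B₀ : Matrix (Fin n) (Fin K) ℝ)
    (hF : ∀ i k, F i k = a k i)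
    (hG : ∀ i k, G i k = (A k).mulVec xc i)
    (hB : B₀ = C * (F - G))
    (Hbar Hlow Hc Hr : Matrix (Fin n) (Fin n) ℝ)
    (hHbar : Hbar = ((1 : Matrix (Fin n) (Fin n) ℝ) - Δ)⁻¹)
    (hHlow : ∀ i j, Hlow i j = if i = j then Hbar j j / (2 * Hbar j j - 1) else -Hbar i j)
    (hHc : Hc = (1 / 2 : ℝ) • (Hbar + Hlow))
    (hHr : Hr = (1 / 2 : ℝ) • (Hbar - Hlow))
    (V : Matrix (Fin n) (Fin K) ℝ) (hV : V = Hc * B₀)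
    (lh : Fin n → ℝ)
    (hlh : lh = Hr.mulVec ((B₀.map (fun x => |x|)).mulVec ph)) :
    (∀ p : Fin K → ℝ, (∀ k, |p k - pc k| ≤ ph k) →
      IsUnit (A₀ + ∑ k, p k • A k) ∧
      ∃ l : Fin n → ℝ, (∀ i, |l i| ≤ lh i) ∧
        Matrix.mulVec (A₀ + ∑ k, p k • A k)⁻¹ (a₀ + ∑ k, p k • a k)
          = xc + V.mulVec (fun k => p k - pc k) + l) ∧
    {x : Fin n → ℝ | ∃ p : Fin K → ℝ, (∀ k, |p k - pc k| ≤ ph k) ∧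
        (A₀ + ∑ k, p k • A k).mulVec x = a₀ + ∑ k, p k • a k} ⊆
      {x : Fin n → ℝ | ∃ q : Fin K → ℝ, ∃ l : Fin n → ℝ,
        (∀ k, |q k| ≤ ph k) ∧ (∀ i, |l i| ≤ lh i) ∧
        x = xc + V.mulVec q + l} := by
  subst hHbar hHc hHr
  have hΔnn : ∀ i j, 0 ≤ Δ i j := fun i j => by
    rw [hΔ, Matrix.sum_apply]
    exact sum_nonneg fun k _ => mul_nonneg (hph k) (abs_nonneg _)
  have hpow := tendsto_pow_atTop_nhds_zero_of_specRad_lt_one hρ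
  have hunit := isUnit_one_sub_of_tendsto_pow hpow
  have hinv := inv_one_sub_apply_nonneg hΔnn hpow
  have hsol : ∀ p : Fin K → ℝ, (∀ k, |p k - pc k| ≤ ph k) →
      IsUnit (A₀ + ∑ k, p k • A k) ∧ ∃ l : Fin n → ℝ, (∀ i, |l i| ≤ lh i) ∧
        (A₀ + ∑ k, p k • A k)⁻¹ *ᵥ (a₀ + ∑ k, p k • a k)
          = xc + V *ᵥ (fun k => p k - pc k) + l := by
    intro p hp
    set q : Fin K → ℝ := fun k => p k - pc k
    set E := ∑ k, q k • A k
    have hD : ∀ i j, |(C * E) i j| ≤ Δ i j := fun i j => by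
      simp only [E, hΔ, mul_sum, mul_smul_comm]
      exact abs_sum_smul_apply_le hp _ i j
    have hDunit : IsUnit (1 + C * E) := isUnit_one_add_of_abs_le hunit hinv hD
    rw [sum_smul_eq_add_sum_sub_smul p pc A, sum_smul_eq_add_sum_sub_smul p pc a, ← add_assoc,
      ← add_assoc]
    rw [hC] at hDunit
    refine ⟨add_eq_mul_one_add_inv_mul hreg E ▸ hreg.mul hDunit,
      ((1 + C * E)⁻¹ - (1 / 2 : ℝ) • ((1 - Δ)⁻¹ + Hlow)) *ᵥ (B₀ *ᵥ q), fun i => ?_, ?_⟩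
    · rw [hlh]
      exact abs_mulVec_mulVec_le (abs_inv_one_add_sub_apply_le hΔnn hunit hinv hD hHlow) hp i
    · rw [inv_add_mulVec_add_eq hreg hDunit, ← hC, ← hxc, hV, hB, ← mulVec_mulVec,
        ← mulVec_mulVec, sub_mulVec_eq_sum_smul_sub hF hG, sub_mulVec]
      abel
  refine ⟨hsol, fun x ⟨p, hp, hx⟩ => ?_⟩
  obtain ⟨hu, l, hl, hxl⟩ := hsol p hp
  refine ⟨fun k => p k - pc k, l, hp, hl, ?_⟩
  rw [← hxl, ← hx, mulVec_mulVec, nonsing_inv_mul _ ((isUnit_iff_isUnit_det _).mp hu), one_mulVec]
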